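/- arXiv:2211.03625 — 2 statements merged into one kernel-verified Lean document; each statement's English description precedes it below -/
import Mathlib

section
/- Let (H_X, H_Z) and (H_X', H_Z') be CSS codes with a gate matrix Γ satisfying rs(H_Z'Γ^T) ⊆ rs(H_Z) and rs(H_XΓ) ⊆ rs(H_X'). Then setting ∂_2 = H_Z^T, ∂_1 = H_X, ∂_2' = H_Z'^T, ∂_1' = H_X', and γ_1 = Γ, there exist linear maps γ_2 and γ_0 such that ∂_2 γ_2 = γ_1 ∂_2' and γ_0 ∂_1' = ∂_1 γ_1, i.e., (γ_2, γ_1, γ_0) is a chain homomorphism. -/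
open Matrix

/-- Row space of a binary matrix. -/
def rowSpace {a b : Type*} [Fintype a] [Fintype b]
    (M : Matrix a b (ZMod 2)) : Submodule (ZMod 2) (b → ZMod 2) :=
  LinearMap.range (Matrix.mulVecLin Mᵀ)

lemma rowSpace_le_factor {a b c : Type*} [Fintype a] [Fintype b] [Fintype c]
    [DecidableEq a]
    (M : Matrix a b (ZMod 2)) (N : Matrix c b (ZMod 2))
    (h : rowSpace M ≤ rowSpace N) : ∃ C : Matrix a c (ZMod 2), C * N = M := by
  have hrow : ∀ i : a, ∃ v : c → (ZMod 2), Nᵀ.mulVec v = M i := by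
    intro i
    have : M i ∈ rowSpace M := ⟨Pi.single i 1, by
      ext j
      simp [Matrix.mulVec, dotProduct, Pi.single_apply]⟩
    exact h this
  choose v hv using hrow
  refine ⟨Matrix.of v, ?_⟩
  ext i j
  have := congrFun (hv i) j
  simp only [Matrix.mulVec, dotProduct, Matrix.transpose_apply] at this
  simpa [Matrix.mul_apply, mul_comm] using this

/-- If `(H_X', H_Z', Γ)` is a homomorphic gadget for `(H_X, H_Z)`, then with
`∂₂ = H_Zᵀ`, `∂₁ = H_X`, `∂₂' = H_Z'ᵀ`, `∂₁' = H_X'`, `γ₁ = Γ`, there are maps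
`γ₂, γ₀` with `∂₂ γ₂ = γ₁ ∂₂'` and `γ₀ ∂₁' = ∂₁ γ₁`: a chain homomorphism. -/
theorem stmt_3 {n m rX rZ rX' rZ' : ℕ}
    (HX : Matrix (Fin rX) (Fin n) (ZMod 2)) (HZ : Matrix (Fin rZ) (Fin n) (ZMod 2))
    (HX' : Matrix (Fin rX') (Fin m) (ZMod 2)) (HZ' : Matrix (Fin rZ') (Fin m) (ZMod 2))
    (hCSS : HX * HZᵀ = 0) (hCSS' : HX' * HZ'ᵀ = 0)
    (Γ : Matrix (Fin n) (Fin m) (ZMod 2))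
    (h1 : rowSpace (HZ' * Γᵀ) ≤ rowSpace HZ)
    (h2 : rowSpace (HX * Γ) ≤ rowSpace HX') :
    (∃ γ₂ : Matrix (Fin rZ) (Fin rZ') (ZMod 2), HZᵀ * γ₂ = Γ * HZ'ᵀ) ∧
    (∃ γ₀ : Matrix (Fin rX) (Fin rX') (ZMod 2), γ₀ * HX' = HX * Γ) := by
  constructor
  · obtain ⟨C, hC⟩ := rowSpace_le_factor (HZ' * Γᵀ) HZ h1
    refine ⟨Cᵀ, ?_⟩
    have := congrArg Matrix.transpose hC
    simpa [Matrix.transpose_mul] using this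
  · exact rowSpace_le_factor (HX * Γ) HX' h2
end

section
/- Shor measurement as a homomorphic gadget: let (H_X, H_Z) be a CSS code and let P ∈ ker(H_X) be a Z-type logical operator of weight w. Let the ancilla code be the w-qubit repetition code with H_X' the (w-1)×w matrix of checks e_i + e_{i+1} and H_Z' the empty (0×w) matrix, and let Γ : F_2^w → F_2^n be the matrix whose j-th column is the j-th element of the support of P. Then (H_X', H_Z', Γ) satisfies the homomorphic gadget conditions rs(H_Z'Γ^T) ⊆ rs(H_Z) and rs(H_XΓ) ⊆ rs(H_X'), and Γ maps the all-ones vector (the unique nontrivial element of ker H_X') to P. -/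
open Matrix

lemma two_eq_zero' : ∀ a : ZMod 2, a + a = 0 := by decide

lemma even_mem_rep {w : ℕ} (HX' : Matrix (Fin (w - 1)) (Fin w) (ZMod 2))
    (hHX' : ∀ (i : Fin (w - 1)) (j : Fin w),
      HX' i j = if (j : ℕ) = (i : ℕ) ∨ (j : ℕ) = (i : ℕ) + 1 then 1 else 0)
    (v : Fin w → ZMod 2) (hv : ∑ j, v j = 0) : v ∈ rowSpace HX' := by
  classical
  set U : ℕ → ZMod 2 := fun m => ∑ k ∈ Finset.univ.filter (fun k : Fin w => (k : ℕ) < m), v k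
    with hU
  refine ⟨fun t => U ((t : ℕ) + 1), ?_⟩
  funext j
  have hjw : (j : ℕ) < w := j.isLt
  -- expand
  have expand : Matrix.mulVecLin HX'ᵀ (fun t => U ((t : ℕ) + 1)) j
      = ∑ t : Fin (w - 1), HX' t j * U ((t : ℕ) + 1) := by
    simp only [Matrix.mulVecLin_apply, Matrix.mulVec, dotProduct, Matrix.transpose_apply]
  rw [expand]
  have step : ∀ t : Fin (w - 1), HX' t j * U ((t : ℕ) + 1)
      = (if (j : ℕ) = (t : ℕ) then U ((t : ℕ) + 1) else 0)
        + (if (j : ℕ) = (t : ℕ) + 1 then U ((t : ℕ) + 1) else 0) := by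
    intro t
    rw [hHX']
    split_ifs with h1 h2 h3 h4 h5 <;> simp_all
  rw [Finset.sum_congr rfl (fun t _ => step t), Finset.sum_add_distrib]
  have h1 : (∑ t : Fin (w - 1), if (j : ℕ) = (t : ℕ) then U ((t : ℕ) + 1) else 0)
      = U ((j : ℕ) + 1) := by
    by_cases h : (j : ℕ) < w - 1
    · rw [Finset.sum_eq_single_of_mem ⟨(j : ℕ), h⟩ (Finset.mem_univ _)]
      · simp
      · intro b _ hb
        rw [if_neg]
        intro hc
        exact hb (by ext; simp [← hc])
    · have hjw1 : (j : ℕ) = w - 1 := by omega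
      have hUw : U ((j : ℕ) + 1) = 0 := by
        have : (j : ℕ) + 1 = w := by omega
        rw [this, hU]
        simpa [Finset.filter_true_of_mem (fun (k : Fin w) _ => k.is_lt)] using hv
      rw [hUw]
      apply Finset.sum_eq_zero
      intro t _
      rw [if_neg]
      have := t.isLt
      omega
  have h2 : (∑ t : Fin (w - 1), if (j : ℕ) = (t : ℕ) + 1 then U ((t : ℕ) + 1) else 0)
      = U (j : ℕ) := by
    by_cases h : 1 ≤ (j : ℕ)
    · have hlt : (j : ℕ) - 1 < w - 1 := by omega
      rw [Finset.sum_eq_single_of_mem ⟨(j : ℕ) - 1, hlt⟩ (Finset.mem_univ _)]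
      · rw [if_pos (by simp; omega)]
        congr 1
        simp; omega
      · intro b _ hb
        rw [if_neg]
        intro hc
        exact hb (by ext; simp; omega)
    · have hj0 : (j : ℕ) = 0 := by omega
      have hU0 : U (j : ℕ) = 0 := by
        rw [hj0, hU]
        simp
      rw [hU0]
      apply Finset.sum_eq_zero
      intro t _
      rw [if_neg]; omega
  rw [h1, h2]
  -- U (j+1) = U j + v j
  have hsplit : U ((j : ℕ) + 1) = v j + U (j : ℕ) := by
    simp only [hU]
    have : Finset.univ.filter (fun k : Fin w => (k : ℕ) < (j : ℕ) + 1)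
        = insert j (Finset.univ.filter (fun k : Fin w => (k : ℕ) < (j : ℕ))) := by
      ext k
      simp [Fin.ext_iff]
      omega
    rw [this, Finset.sum_insert (by simp)]
  rw [hsplit, add_assoc, two_eq_zero' _, add_zero]

/-- Shor measurement as a homomorphic gadget: for a `Z`-type logical operator
`P ∈ ker H_X` of weight `w` with support enumerated by `s : Fin w ↪ Fin n`, the
`w`-qubit repetition code (X-checks `e_i + e_{i+1}`, no Z-checks) together with the
gate matrix `Γ` whose `j`-th column is the indicator of `s j` is a homomorphic gadget,
and `Γ` maps the all-ones vector to `P`. -/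
theorem stmt_7 {n rX rZ w : ℕ}
    (HX : Matrix (Fin rX) (Fin n) (ZMod 2)) (HZ : Matrix (Fin rZ) (Fin n) (ZMod 2))
    (hCSS : HX * HZᵀ = 0)
    (P : Fin n → ZMod 2) (hP : P ∈ LinearMap.ker (Matrix.mulVecLin HX))
    (s : Fin w → Fin n) (hs : Function.Injective s)
    (hsupp : ∀ i : Fin n, P i = 1 ↔ i ∈ Set.range s)
    (HX' : Matrix (Fin (w - 1)) (Fin w) (ZMod 2))
    (hHX' : ∀ (i : Fin (w - 1)) (j : Fin w),
      HX' i j = if (j : ℕ) = (i : ℕ) ∨ (j : ℕ) = (i : ℕ) + 1 then 1 else 0)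
    (HZ' : Matrix (Fin 0) (Fin w) (ZMod 2))
    (Γ : Matrix (Fin n) (Fin w) (ZMod 2))
    (hΓ : ∀ (i : Fin n) (j : Fin w), Γ i j = if i = s j then 1 else 0) :
    rowSpace (HZ' * Γᵀ) ≤ rowSpace HZ ∧
    rowSpace (HX * Γ) ≤ rowSpace HX' ∧
    Γ.mulVec (fun _ => 1) = P := by
  classical
  have hPker : HX.mulVec P = 0 := hP
  -- column sums of Γ give P
  have hcol : ∀ i : Fin n, (∑ j : Fin w, Γ i j) = P i := by
    intro i
    by_cases h : i ∈ Set.range s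
    · obtain ⟨j0, rfl⟩ := h
      rw [Finset.sum_eq_single_of_mem j0 (Finset.mem_univ _)]
      · rw [hΓ, if_pos rfl, ((hsupp _).mpr ⟨j0, rfl⟩)]
      · intro b _ hb
        rw [hΓ, if_neg]
        exact fun hc => hb (hs hc.symm)
    · have hP0 : P i = 0 := by
        have h1 : P i ≠ 1 := fun hc => h ((hsupp i).mp hc)
        have hd : ∀ a : ZMod 2, a ≠ 1 → a = 0 := by decide
        exact hd _ h1
      rw [hP0]
      apply Finset.sum_eq_zero
      intro j _
      rw [hΓ, if_neg]
      exact fun hc => h ⟨j, hc.symm⟩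
  refine ⟨?_, ?_, ?_⟩
  · rintro x ⟨u, rfl⟩
    have : Matrix.mulVecLin (HZ' * Γᵀ)ᵀ u = 0 := by
      funext j
      simp [Matrix.mulVecLin_apply, Matrix.mulVec, dotProduct]
    rw [this]
    exact Submodule.zero_mem _
  · rintro x ⟨u, rfl⟩
    apply even_mem_rep HX' hHX'
    have hrw : Matrix.mulVecLin (HX * Γ)ᵀ u = Γᵀ.mulVec (HXᵀ.mulVec u) := by
      simp [Matrix.mulVec_transpose, Matrix.vecMul_vecMul]
    rw [hrw]
    have : (∑ j : Fin w, Γᵀ.mulVec (HXᵀ.mulVec u) j)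
        = P ⬝ᵥ (HXᵀ.mulVec u) := by
      simp only [Matrix.mulVec, dotProduct, Matrix.transpose_apply]
      rw [Finset.sum_comm]
      apply Finset.sum_congr rfl
      intro i _
      rw [← Finset.sum_mul, hcol]
    rw [this, Matrix.dotProduct_mulVec, Matrix.vecMul_transpose, hPker]
    simp
  · funext i
    have : Γ.mulVec (fun _ => 1) i = ∑ j : Fin w, Γ i j := by
      simp [Matrix.mulVec, dotProduct]
    rw [this, hcol]
end
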